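/- One-step soundness of the abstract decision-tree learner: Let T be a finite training set of labeled examples over 𝒳 × Fin k, n : ℕ, Φ a finite set of decidable predicates on inputs, x an input, and T' ∈ Δₙ(T). Suppose φ' ∈ Φ splits T' non-trivially and score(T', φ') ≤ score(T', ψ) for every ψ ∈ Φ splitting T' non-trivially. Let Ψ = bestSplit#(⟨T, n⟩), defined as Φ_∃ if Φ_∀ = ∅, and otherwise {φ ∈ Φ_∃ : sInf(score#(⟨T, n⟩, φ)) ≤ min_{ψ ∈ Φ_∀} sSup(score#(⟨T, n⟩, ψ))}. Then: (i) φ' ∈ Ψ; and (ii) filter(T', φ', x) ∈ γ(A), where A is the left fold of ⊔ over the (nonempty) list of abstract training sets ⟨T, n⟩|#φ for each φ ∈ Ψ with φ(x) followed by ⟨T, n⟩|#¬φ for each φ ∈ Ψ with ¬φ(x). -/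

import Mathlib

/-- The n-poisoning perturbed set: all subsets of `T` missing at most `n` elements. -/
def Perturb {α : Type*} [DecidableEq α] (T : Finset α) (n : ℕ) : Set (Finset α) :=
  {T' | T' ⊆ T ∧ (T \ T').card ≤ n}

/-- Concretization of an abstract training set `⟨T, n⟩`. -/
def aGamma {α : Type*} [DecidableEq α] (A : Finset α × ℕ) : Set (Finset α) :=
  Perturb A.1 A.2

/-- Join of abstract training sets. -/
def aJoin {α : Type*} [DecidableEq α] (A B : Finset α × ℕ) : Finset α × ℕ :=
  (A.1 ∪ B.1, max ((A.1 \ B.1).card + B.2) ((B.1 \ A.1).card + A.2))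

variable {X : Type*} [DecidableEq X] {k : ℕ}

/-- `cnt T i` is the number of elements of `T` with class label `i`. -/
def cnt (T : Finset (X × Fin k)) (i : Fin k) : ℕ :=
  (T.filter fun e => e.2 = i).card

/-- The class probability `pᵢ(T) = cᵢ(T) / |T|` (with `pᵢ(∅) = 0` by `0/0 = 0`). -/
noncomputable def cprob (T : Finset (X × Fin k)) (i : Fin k) : ℝ :=
  (cnt T i : ℝ) / (T.card : ℝ)

/-- The abstract class-probability transformer. -/
noncomputable def cprobAbs (T : Finset (X × Fin k)) (n : ℕ) (i : Fin k) : Set ℝ :=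
  if n < T.card then
    {p | ∃ a b : ℝ, max 0 ((cnt T i : ℝ) - n) ≤ a ∧ a ≤ (cnt T i : ℝ) ∧
      (T.card : ℝ) - n ≤ b ∧ b ≤ (T.card : ℝ) ∧ p = a / b}
  else Set.Icc (0 : ℝ) 1

/-- The Gini impurity `ent(T) = Σᵢ pᵢ(T)(1 − pᵢ(T))`. -/
noncomputable def gini (T : Finset (X × Fin k)) : ℝ :=
  ∑ i : Fin k, cprob T i * (1 - cprob T i)

/-- The abstract Gini impurity. -/
noncomputable def giniAbs (T : Finset (X × Fin k)) (n : ℕ) : Set ℝ :=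
  {e | ∃ q q' : Fin k → ℝ, (∀ i, q i ∈ cprobAbs T n i) ∧ (∀ i, q' i ∈ cprobAbs T n i) ∧
    e = ∑ i : Fin k, q i * (1 - q' i)}

/-- `T|φ`. -/
def restr (T : Finset (X × Fin k)) (φ : X → Bool) : Finset (X × Fin k) :=
  T.filter fun e => φ e.1 = true

/-- `T|¬φ`. -/
def restrNeg (T : Finset (X × Fin k)) (φ : X → Bool) : Finset (X × Fin k) :=
  T.filter fun e => φ e.1 = false

/-- The concrete score `score(T, φ) = |T|φ| · ent(T|φ) + |T|¬φ| · ent(T|¬φ)`. -/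
noncomputable def scoreC (T : Finset (X × Fin k)) (φ : X → Bool) : ℝ :=
  ((restr T φ).card : ℝ) * gini (restr T φ) + ((restrNeg T φ).card : ℝ) * gini (restrNeg T φ)

/-- The abstract score `score#(⟨T, n⟩, φ)`. -/
noncomputable def scoreAbs (T : Finset (X × Fin k)) (n : ℕ) (φ : X → Bool) : Set ℝ :=
  {s | ∃ m₁ e₁ m₂ e₂ : ℝ,
    ((restr T φ).card : ℝ) - (min n (restr T φ).card : ℕ) ≤ m₁ ∧
    m₁ ≤ ((restr T φ).card : ℝ) ∧
    e₁ ∈ giniAbs (restr T φ) (min n (restr T φ).card) ∧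
    ((restrNeg T φ).card : ℝ) - (min n (restrNeg T φ).card : ℕ) ≤ m₂ ∧
    m₂ ≤ ((restrNeg T φ).card : ℝ) ∧
    e₂ ∈ giniAbs (restrNeg T φ) (min n (restrNeg T φ).card) ∧
    s = m₁ * e₁ + m₂ * e₂}

/-- `φ` splits `T'` trivially if `T'|φ = ∅` or `T'|φ = T'`. -/
def trivialSplit (T' : Finset (X × Fin k)) (φ : X → Bool) : Prop :=
  restr T' φ = ∅ ∨ restr T' φ = T'

/-- `Φ_∀ = {φ ∈ Φ : n < |T|φ| ∧ n < |T|¬φ|}`. -/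
def PhiAll (T : Finset (X × Fin k)) (n : ℕ) (Φ : List (X → Bool)) : Set (X → Bool) :=
  {φ | φ ∈ Φ ∧ n < (restr T φ).card ∧ n < (restrNeg T φ).card}

/-- `Φ_∃ = {φ ∈ Φ : T|φ ≠ ∅ ∧ T|¬φ ≠ ∅}`. -/
def PhiEx (T : Finset (X × Fin k)) (Φ : List (X → Bool)) : Set (X → Bool) :=
  {φ | φ ∈ Φ ∧ restr T φ ≠ ∅ ∧ restrNeg T φ ≠ ∅}

/-- Abstract restriction `⟨T, n⟩|#φ = ⟨T|φ, min(n, |T|φ|)⟩`. -/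
def aRestrict (T : Finset (X × Fin k)) (n : ℕ) (φ : X × Fin k → Prop)
    [DecidablePred φ] : Finset (X × Fin k) × ℕ :=
  (T.filter φ, min n (T.filter φ).card)

/-- The concrete filter: `T'|φ'` if `φ'(x)` holds, and `T'|¬φ'` otherwise. -/
def cFilter (T' : Finset (X × Fin k)) (φ : X → Bool) (x : X) : Finset (X × Fin k) :=
  if φ x then T'.filter (fun e => φ e.1 = true) else T'.filter (fun e => φ e.1 = false)

/-- The list of abstract training sets `⟨T, n⟩|#φ` for each `φ ∈ Ψ` with `φ(x)`,
followed by `⟨T, n⟩|#¬φ` for each `φ ∈ Ψ` with `¬φ(x)`. -/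
def filterList (T : Finset (X × Fin k)) (n : ℕ) (Ψ : List (X → Bool)) (x : X) :
    List (Finset (X × Fin k) × ℕ) :=
  (Ψ.filter fun φ => φ x).map (fun φ => aRestrict T n (fun e => φ e.1 = true)) ++
  (Ψ.filter fun φ => !(φ x)).map (fun φ => aRestrict T n (fun e => φ e.1 = false))

/-!
Each concrete quantity computed from a poisoned set `T' ∈ Δₙ(T)` (class probabilities,
Gini impurities, scores) lies in its abstract counterpart for `⟨T, n⟩`, and these abstract
sets are bounded. A split `ψ ∈ Φ_∀` keeps more than `n` points on each side, so it stays
non-trivial on `T'`, and minimality of `φ'` gives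
`inf score#(φ') ≤ score(T', φ') ≤ score(T', ψ) ≤ sup score#(ψ)`: `φ'` survives the pruning.
For the second part, `filter(T', φ', x)` lies in `γ(⟨T, n⟩|#φ')` or `γ(⟨T, n⟩|#¬φ')`, and the
concretization of a join contains that of each joinand.
-/

section Join

variable {α : Type*} [DecidableEq α]

theorem aJoin_comm (A B : Finset α × ℕ) : aJoin A B = aJoin B A := by
  simp only [aJoin, Finset.union_comm, max_comm]

theorem aGamma_subset_aGamma_aJoin_left (A B : Finset α × ℕ) :
    aGamma A ⊆ aGamma (aJoin A B) := by
  rintro S ⟨hSA, hcard⟩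
  refine ⟨hSA.trans Finset.subset_union_left, le_max_of_le_right ?_⟩
  calc ((A.1 ∪ B.1) \ S).card ≤ ((B.1 \ A.1) ∪ (A.1 \ S)).card := by
        apply Finset.card_le_card
        intro a
        simp only [Finset.mem_sdiff, Finset.mem_union]
        tauto
    _ ≤ (B.1 \ A.1).card + (A.1 \ S).card := Finset.card_union_le _ _
    _ ≤ (B.1 \ A.1).card + A.2 := Nat.add_le_add_left hcard _

theorem aGamma_subset_aGamma_aJoin_right (A B : Finset α × ℕ) :
    aGamma B ⊆ aGamma (aJoin A B) :=
  aJoin_comm B A ▸ aGamma_subset_aGamma_aJoin_left B A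

theorem aGamma_subset_aGamma_foldl_aJoin (L : List (Finset α × ℕ)) (I : Finset α × ℕ) :
    aGamma I ⊆ aGamma (L.foldl aJoin I) := by
  induction L generalizing I with
  | nil => exact subset_rfl
  | cons A L ih => exact (aGamma_subset_aGamma_aJoin_left I A).trans (ih _)

theorem aGamma_subset_aGamma_foldl_aJoin_of_mem {L : List (Finset α × ℕ)} {A : Finset α × ℕ}
    (hA : A ∈ L) (I : Finset α × ℕ) : aGamma A ⊆ aGamma (L.foldl aJoin I) := by
  induction L generalizing I with
  | nil => cases hA
  | cons B L ih =>
    rcases List.mem_cons.1 hA with rfl | hA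
    · exact (aGamma_subset_aGamma_aJoin_right I A).trans (aGamma_subset_aGamma_foldl_aJoin L _)
    · exact ih hA _

theorem aGamma_subset_aGamma_foldl_aJoin_headI {L : List (Finset α × ℕ)} {A : Finset α × ℕ}
    (hA : A ∈ L) : aGamma A ⊆ aGamma (L.tail.foldl aJoin L.headI) := by
  cases L with
  | nil => cases hA
  | cons B L =>
    rcases List.mem_cons.1 hA with rfl | hA
    · exact aGamma_subset_aGamma_foldl_aJoin L A
    · exact aGamma_subset_aGamma_foldl_aJoin_of_mem hA B

end Join

section Perturb

variable {α : Type*} [DecidableEq α] {T T' : Finset α} {n : ℕ}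

theorem card_le_card_add_of_mem_perturb (h : T' ∈ Perturb T n) : T.card ≤ T'.card + n := by
  have := Finset.card_sdiff_of_subset h.1
  have := h.2
  omega

theorem card_sub_le_card_of_mem_perturb (h : T' ∈ Perturb T n) :
    (T.card : ℝ) - n ≤ T'.card := by
  rw [sub_le_iff_le_add]
  exact_mod_cast card_le_card_add_of_mem_perturb h

theorem nonempty_of_mem_perturb (h : T' ∈ Perturb T n) (hn : n < T.card) : T'.Nonempty :=
  Finset.card_pos.1 (by have := card_le_card_add_of_mem_perturb h; omega)

theorem mem_perturb_min_card (h : T' ∈ Perturb T n) : T' ∈ Perturb T (min n T.card) :=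
  ⟨h.1, le_min h.2 (Finset.card_le_card Finset.sdiff_subset)⟩

theorem filter_mem_perturb (h : T' ∈ Perturb T n) (p : α → Prop) [DecidablePred p] :
    T'.filter p ∈ Perturb (T.filter p) n := by
  refine ⟨Finset.filter_subset_filter p h.1, le_trans (Finset.card_le_card ?_) h.2⟩
  intro a
  simp only [Finset.mem_sdiff, Finset.mem_filter]
  tauto

end Perturb

section Score

variable {T T' : Finset (X × Fin k)} {n : ℕ}

theorem filter_mem_aGamma_aRestrict (h : T' ∈ Perturb T n) (p : X × Fin k → Prop)
    [DecidablePred p] : T'.filter p ∈ aGamma (aRestrict T n p) :=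
  mem_perturb_min_card (filter_mem_perturb h p)

theorem cprob_mem_cprobAbs (h : T' ∈ Perturb T n) (i : Fin k) :
    cprob T' i ∈ cprobAbs T n i := by
  have hcnt := filter_mem_perturb h (fun e => e.2 = i)
  unfold cprob cprobAbs
  split_ifs
  · exact ⟨cnt T' i, T'.card, max_le (Nat.cast_nonneg _) (card_sub_le_card_of_mem_perturb hcnt),
      by exact_mod_cast Finset.card_le_card hcnt.1, card_sub_le_card_of_mem_perturb h,
      by exact_mod_cast Finset.card_le_card h.1, rfl⟩
  · exact ⟨by positivity,
      div_le_one_of_le₀ (by exact_mod_cast Finset.card_filter_le _ _) (Nat.cast_nonneg _)⟩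

theorem gini_mem_giniAbs (h : T' ∈ Perturb T n) : gini T' ∈ giniAbs T n :=
  ⟨cprob T', cprob T', cprob_mem_cprobAbs h, cprob_mem_cprobAbs h, rfl⟩

theorem scoreC_mem_scoreAbs (h : T' ∈ Perturb T n) (φ : X → Bool) :
    scoreC T' φ ∈ scoreAbs T n φ := by
  have h₁ : restr T' φ ∈ Perturb (restr T φ) (min n (restr T φ).card) :=
    filter_mem_aGamma_aRestrict h _
  have h₂ : restrNeg T' φ ∈ Perturb (restrNeg T φ) (min n (restrNeg T φ).card) :=
    filter_mem_aGamma_aRestrict h _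
  exact ⟨_, _, _, _, card_sub_le_card_of_mem_perturb h₁,
    by exact_mod_cast Finset.card_le_card h₁.1, gini_mem_giniAbs h₁,
    card_sub_le_card_of_mem_perturb h₂, by exact_mod_cast Finset.card_le_card h₂.1,
    gini_mem_giniAbs h₂, rfl⟩

omit [DecidableEq X] in
theorem cprobAbs_subset_Icc (T : Finset (X × Fin k)) (n : ℕ) (i : Fin k) :
    cprobAbs T n i ⊆ Set.Icc 0 (T.card + 1) := by
  intro p hp
  have hT : (0 : ℝ) ≤ T.card := Nat.cast_nonneg _
  unfold cprobAbs at hp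
  split_ifs at hp with hn
  · obtain ⟨a, b, ha₀, haT, hbT, -, rfl⟩ := hp
    have ha : 0 ≤ a := (le_max_left _ _).trans ha₀
    have hb : 1 ≤ b := by
      have : (n : ℝ) + 1 ≤ T.card := by exact_mod_cast hn
      linarith
    have hcnt : (cnt T i : ℝ) ≤ T.card := by exact_mod_cast Finset.card_filter_le _ _
    exact ⟨div_nonneg ha (by linarith), (div_le_self ha hb).trans (by linarith)⟩
  · exact ⟨hp.1, by linarith [hp.2]⟩

open Bornology

omit [DecidableEq X] in
theorem isBounded_giniAbs (T : Finset (X × Fin k)) (n : ℕ) : IsBounded (giniAbs T n) := by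
  set box : Set (Fin k → ℝ) := Set.univ.pi fun _ => Set.Icc 0 (T.card + 1)
  have hbox : IsCompact box := isCompact_univ_pi fun _ => isCompact_Icc
  refine ((hbox.prod hbox).image
    (f := fun q : (Fin k → ℝ) × (Fin k → ℝ) => ∑ i, q.1 i * (1 - q.2 i))
    (by fun_prop)).isBounded.subset ?_
  rintro e ⟨q, q', hq, hq', rfl⟩
  exact ⟨(q, q'), ⟨fun i _ => cprobAbs_subset_Icc T n i (hq i),
    fun i _ => cprobAbs_subset_Icc T n i (hq' i)⟩, rfl⟩

omit [DecidableEq X] in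
theorem isBounded_scoreAbs (T : Finset (X × Fin k)) (n : ℕ) (φ : X → Bool) :
    IsBounded (scoreAbs T n φ) := by
  refine IsBounded.subset ?_ fun s ⟨m₁, e₁, m₂, e₂, hm₁, hm₁', he₁, hm₂, hm₂', he₂, hs⟩ =>
    hs ▸ Set.add_mem_add (Set.mul_mem_mul (Set.mem_Icc.2 ⟨hm₁, hm₁'⟩) he₁)
      (Set.mul_mem_mul (Set.mem_Icc.2 ⟨hm₂, hm₂'⟩) he₂)
  exact (isBounded_mul (Metric.isBounded_Icc _ _) (isBounded_giniAbs _ _)).add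
    (isBounded_mul (Metric.isBounded_Icc _ _) (isBounded_giniAbs _ _))

theorem sInf_scoreAbs_le_sSup_scoreAbs (h : T' ∈ Perturb T n) {φ ψ : X → Bool}
    (hle : scoreC T' φ ≤ scoreC T' ψ) : sInf (scoreAbs T n φ) ≤ sSup (scoreAbs T n ψ) :=
  calc sInf (scoreAbs T n φ)
      _ ≤ scoreC T' φ := csInf_le (isBounded_scoreAbs T n φ).bddBelow (scoreC_mem_scoreAbs h φ)
      _ ≤ scoreC T' ψ := hle
      _ ≤ sSup (scoreAbs T n ψ) :=
        le_csSup (isBounded_scoreAbs T n ψ).bddAbove (scoreC_mem_scoreAbs h ψ)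

end Score

section Split

variable {T T' : Finset (X × Fin k)} {n : ℕ} {Φ : List (X → Bool)}

omit [DecidableEq X] in
theorem trivialSplit_iff {φ : X → Bool} :
    trivialSplit T φ ↔ restr T φ = ∅ ∨ restrNeg T φ = ∅ := by
  simp [trivialSplit, restr, restrNeg, Finset.filter_eq_self, Finset.filter_eq_empty_iff]

theorem not_trivialSplit_of_mem_PhiAll (h : T' ∈ Perturb T n) {ψ : X → Bool}
    (hψ : ψ ∈ PhiAll T n Φ) : ¬ trivialSplit T' ψ := by
  rw [trivialSplit_iff, not_or, ← Ne, ← Ne, ← Finset.nonempty_iff_ne_empty,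
    ← Finset.nonempty_iff_ne_empty]
  exact ⟨nonempty_of_mem_perturb (filter_mem_perturb h _) hψ.2.1,
    nonempty_of_mem_perturb (filter_mem_perturb h _) hψ.2.2⟩

omit [DecidableEq X] in
theorem mem_PhiEx_of_not_trivialSplit (h : T' ⊆ T) {φ : X → Bool} (hφ : φ ∈ Φ)
    (hnt : ¬ trivialSplit T' φ) : φ ∈ PhiEx T Φ := by
  rw [trivialSplit_iff, not_or] at hnt
  exact ⟨hφ, fun hT => hnt.1 (Finset.subset_empty.1 (hT ▸ Finset.filter_subset_filter _ h)),
    fun hT => hnt.2 (Finset.subset_empty.1 (hT ▸ Finset.filter_subset_filter _ h))⟩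

theorem exists_mem_filterList_cFilter_mem_aGamma (h : T' ∈ Perturb T n) {l : List (X → Bool)}
    {φ : X → Bool} (hφ : φ ∈ l) (x : X) :
    ∃ A ∈ filterList T n l x, cFilter T' φ x ∈ aGamma A := by
  cases hx : φ x
  · refine ⟨_, List.mem_append_right _
      (List.mem_map_of_mem (List.mem_filter.2 ⟨hφ, by simp [hx]⟩)), ?_⟩
    simpa only [cFilter, hx, Bool.false_eq_true, ↓reduceIte] using
      filter_mem_aGamma_aRestrict h _
  · refine ⟨_, List.mem_append_left _
      (List.mem_map_of_mem (List.mem_filter.2 ⟨hφ, by simp [hx]⟩)), ?_⟩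
    simpa only [cFilter, hx, Bool.false_eq_true, ↓reduceIte] using
      filter_mem_aGamma_aRestrict h _

end Split

theorem abstract_learner_step_sound_general
    (T : Finset (X × Fin k)) (n : ℕ) (Φ : List (X → Bool)) (x : X)
    (T' : Finset (X × Fin k)) (hT' : T' ∈ Perturb T n)
    (φ' : X → Bool) (hφ'Φ : φ' ∈ Φ)
    (hnt : ¬ trivialSplit T' φ')
    (hmin : ∀ ψ ∈ Φ, ¬ trivialSplit T' ψ → scoreC T' φ' ≤ scoreC T' ψ)
    (Ψ : Set (X → Bool))
    (hΨ₁ : PhiAll T n Φ = ∅ → Ψ = PhiEx T Φ)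
    (hΨ₂ : PhiAll T n Φ ≠ ∅ → Ψ = {φ ∈ PhiEx T Φ |
      sInf (scoreAbs T n φ) ≤ sInf {s | ∃ ψ ∈ PhiAll T n Φ, s = sSup (scoreAbs T n ψ)}}) :
    φ' ∈ Ψ ∧
    ∀ l : List (X → Bool), (∀ φ, φ ∈ l ↔ φ ∈ Ψ) →
      cFilter T' φ' x ∈
        aGamma ((filterList T n l x).tail.foldl aJoin (filterList T n l x).headI) := by
  have hφ'Ex : φ' ∈ PhiEx T Φ := mem_PhiEx_of_not_trivialSplit hT'.1 hφ'Φ hnt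
  have hφ'Ψ : φ' ∈ Ψ := by
    by_cases hAll : PhiAll T n Φ = ∅
    · exact hΨ₁ hAll ▸ hφ'Ex
    rw [hΨ₂ hAll]
    refine ⟨hφ'Ex, le_csInf ?_ ?_⟩
    · obtain ⟨ψ, hψ⟩ := Set.nonempty_iff_ne_empty.2 hAll
      exact ⟨_, ψ, hψ, rfl⟩
    · rintro _ ⟨ψ, hψ, rfl⟩
      exact sInf_scoreAbs_le_sSup_scoreAbs hT'
        (hmin ψ hψ.1 (not_trivialSplit_of_mem_PhiAll hT' hψ))
  refine ⟨hφ'Ψ, fun l hl => ?_⟩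
  obtain ⟨A, hA, hmem⟩ := exists_mem_filterList_cFilter_mem_aGamma hT' ((hl φ').2 hφ'Ψ) x
  exact aGamma_subset_aGamma_foldl_aJoin_headI hA hmem

/-- One-step soundness of the abstract decision-tree learner: if `φ' ∈ Φ`
non-trivially splits `T' ∈ Δₙ(T)` with minimal score among non-trivial splits,
and `Ψ = bestSplit#(⟨T, n⟩)` (which equals `Φ_∃` when `Φ_∀ = ∅`, and otherwise
`{φ ∈ Φ_∃ : sInf(score#(⟨T, n⟩, φ)) ≤ min_{ψ ∈ Φ_∀} sSup(score#(⟨T, n⟩, ψ))}`),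
then (i) `φ' ∈ Ψ`, and (ii) for any list `l` enumerating `Ψ`,
`filter(T', φ', x) ∈ γ(A)` where `A` is the left fold of `⊔` over the list
`filterList T n l x` starting from its head. -/
theorem abstract_learner_step_sound (hk : 1 ≤ k)
    (T : Finset (X × Fin k)) (n : ℕ) (Φ : List (X → Bool)) (x : X)
    (T' : Finset (X × Fin k)) (hT' : T' ∈ Perturb T n)
    (φ' : X → Bool) (hφ'Φ : φ' ∈ Φ)
    (hnt : ¬ trivialSplit T' φ')
    (hmin : ∀ ψ ∈ Φ, ¬ trivialSplit T' ψ → scoreC T' φ' ≤ scoreC T' ψ)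
    (Ψ : Set (X → Bool))
    (hΨ₁ : PhiAll T n Φ = ∅ → Ψ = PhiEx T Φ)
    (hΨ₂ : PhiAll T n Φ ≠ ∅ → Ψ = {φ ∈ PhiEx T Φ |
      sInf (scoreAbs T n φ) ≤ sInf {s | ∃ ψ ∈ PhiAll T n Φ, s = sSup (scoreAbs T n ψ)}}) :
    φ' ∈ Ψ ∧
    ∀ l : List (X → Bool), (∀ φ, φ ∈ l ↔ φ ∈ Ψ) →
      cFilter T' φ' x ∈
        aGamma ((filterList T n l x).tail.foldl aJoin (filterList T n l x).headI) :=
  abstract_learner_step_sound_general T n Φ x T' hT' φ' hφ'Φ hnt hmin Ψ hΨ₁ hΨ₂
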